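/- Let (X,Y) = {(X_n,Y_n)}_{n=1}^∞ be an arbitrary random sequence, where (X^n, Y^n) ~ P_{X^nY^n} takes values in (𝒳×𝒴)^n with 𝒳, 𝒴 finite. Then lim_{ε→0} limsup_{n→∞} H_0^ε(X^n|Y^n)/n = H̄(X|Y), the spectral-sup conditional entropy rate. -/

import Mathlib

/-! Write `F_n(a) = Pr{-log₂ P(Xⁿ|Yⁿ) / n ≤ a}`. Restricting `P` to the event
`P(x|y) ≥ 2^{-na}` leaves at most `2^{na}` values of `x` for each `y`, so `F_n(a) ≥ 1 - ε`
gives `H₀^ε(Xⁿ|Yⁿ) ≤ na`. Conversely, a `Q ≤ P` with at most `M` values of `x` for each `y`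
has mass at most `F_n(a) + M 2^{-na}`, so `F_n(a) < 1 - ε` gives
`H₀^ε(Xⁿ|Yⁿ) ≥ na + log₂(1 - ε - F_n(a))`, and the last term is `o(n)`. Hence
`limsup_n H₀^ε/n ≤ a` for every `ε > 0` as soon as `liminf_n F_n(a) = 1`, while otherwise
`limsup_n H₀^ε/n ≥ a` for all small `ε`. -/

open scoped Classical BigOperators

/-- The conditional smooth max Rényi entropy of order zero,
`H₀^ε(A|B) = min_{Q ∈ B^ε(P_{AB})} log₂ max_{b} |Supp(Q(A|B = b))|`. -/
noncomputable def H0sm {α β : Type*} [Fintype α] [Fintype β]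
    (ε : ℝ) (PAB : α × β → ℝ) : ℝ :=
  sInf {r : ℝ | ∃ Q : α × β → ℝ,
    (∀ p, 0 ≤ Q p ∧ Q p ≤ PAB p) ∧ 1 - ε ≤ ∑ p, Q p ∧
    r = Real.logb 2
      (↑(Finset.univ.sup fun b : β =>
        (Finset.univ.filter fun a : α => 0 < Q (a, b)).card) : ℝ)}

open Filter Finset Topology

lemma Real.logb_natCast_nonneg {b : ℝ} (hb : 1 ≤ b) (m : ℕ) : 0 ≤ Real.logb b m :=
  div_nonneg (Real.log_natCast_nonneg m) (Real.log_nonneg hb)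

lemma Real.logb_natCast_mono {b : ℝ} (hb : 1 < b) {m k : ℕ} (h : m ≤ k) :
    Real.logb b m ≤ Real.logb b k := by
  rcases Nat.eq_zero_or_pos m with rfl | hm
  · simpa using Real.logb_natCast_nonneg hb.le k
  · exact Real.logb_le_logb_of_le hb (by exact_mod_cast hm) (by exact_mod_cast h)

lemma Real.logb_natCast_le {b : ℝ} (hb : 1 < b) {m : ℕ} {t : ℝ} (ht : 0 ≤ t)
    (hm : (m : ℝ) ≤ b ^ t) : Real.logb b m ≤ t := by
  rcases Nat.eq_zero_or_pos m with rfl | hm0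
  · simpa using ht
  · exact (Real.logb_le_iff_le_rpow hb (by exact_mod_cast hm0)).2 hm

lemma Real.neg_logb_div_le_iff {b t N a : ℝ} (hb : 1 < b) (ht : 0 < t) (hN : 0 < N) :
    -Real.logb b t / N ≤ a ↔ b ^ (-(N * a)) ≤ t := by
  rw [div_le_iff₀ hN, ← Real.le_logb_iff_rpow_le hb ht]
  constructor <;> intro h <;> linarith

lemma Filter.le_limsup_of_frequently_le_add {ι : Type*} {f : Filter ι} {u c : ι → ℝ}
    {a : ℝ} (hc : Tendsto c f (𝓝 0)) (hu : IsBoundedUnder (· ≤ ·) f u)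
    (h : ∃ᶠ i in f, a + c i ≤ u i) : a ≤ limsup u f := by
  refine le_of_forall_lt_imp_le_of_dense fun b hb => ?_
  refine le_limsup_of_frequently_le ?_ hu
  exact (h.and_eventually (hc.eventually (lt_mem_nhds (sub_neg.2 hb)))).mono
    fun i hi => by linarith [hi.1, hi.2]

section OneShot

variable {α β : Type*} [Fintype α] {Pr Q : α × β → ℝ} {ε N a : ℝ}

noncomputable def marginal (Pr : α × β → ℝ) (b : β) : ℝ := ∑ x, Pr (x, b)

noncomputable def condProb (Pr : α × β → ℝ) (p : α × β) : ℝ := Pr p / marginal Pr p.2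

lemma marginal_nonneg (hPr0 : ∀ p, 0 ≤ Pr p) (b : β) : 0 ≤ marginal Pr b :=
  sum_nonneg fun x _ => hPr0 (x, b)

lemma le_marginal (hPr0 : ∀ p, 0 ≤ Pr p) (p : α × β) : Pr p ≤ marginal Pr p.2 :=
  single_le_sum (f := fun x => Pr (x, p.2)) (fun x _ => hPr0 (x, p.2)) (mem_univ p.1)

lemma sum_condProb_le_one (b : β) : ∑ x, condProb Pr (x, b) ≤ 1 := by
  simp only [condProb, ← sum_div]
  exact div_self_le_one _

lemma condProb_le_one (hPr0 : ∀ p, 0 ≤ Pr p) (p : α × β) : condProb Pr p ≤ 1 :=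
  div_le_one_of_le₀ (le_marginal hPr0 p) (marginal_nonneg hPr0 p.2)

lemma le_rpow_mul_marginal_of_not_le (hPr0 : ∀ p, 0 ≤ Pr p) (hN : 0 < N) {p : α × β}
    (hp : ¬ -Real.logb 2 (condProb Pr p) / N ≤ a) :
    Pr p ≤ 2 ^ (-(N * a)) * marginal Pr p.2 := by
  rcases (hPr0 p).eq_or_lt with hp0 | hp0
  · rw [← hp0]; exact mul_nonneg (by positivity) (marginal_nonneg hPr0 p.2)
  have hm : 0 < marginal Pr p.2 := hp0.trans_le (le_marginal hPr0 p)
  rw [Real.neg_logb_div_le_iff one_lt_two (show 0 < condProb Pr p from div_pos hp0 hm) hN,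
    not_le] at hp
  exact ((div_lt_iff₀ hm).1 hp).le

variable [Fintype β]

/-- `Pr{-log₂ P(A|B) / N ≤ a}`. Since `logb 2 0 = 0`, pairs with `P(A|B) = 0` fall in the event
when `0 ≤ a`; they carry no mass. -/
noncomputable def condInfoSpectrum (Pr : α × β → ℝ) (N a : ℝ) : ℝ :=
  ∑ p, if -Real.logb 2 (condProb Pr p) / N ≤ a then Pr p else 0

noncomputable def maxCondSupportCard (Q : α × β → ℝ) : ℕ :=
  univ.sup fun b => #{x | 0 < Q (x, b)}

lemma sum_marginal : ∑ b, marginal Pr b = ∑ p, Pr p :=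
  (Fintype.sum_prod_type_right Pr).symm

lemma H0sm_le_logb_maxCondSupportCard (hQ : ∀ p, 0 ≤ Q p ∧ Q p ≤ Pr p)
    (hsum : 1 - ε ≤ ∑ p, Q p) : H0sm ε Pr ≤ Real.logb 2 (maxCondSupportCard Q) :=
  csInf_le ⟨0, by rintro r ⟨Q, -, -, rfl⟩; exact Real.logb_natCast_nonneg one_le_two _⟩
    ⟨Q, hQ, hsum, rfl⟩

lemma le_H0sm {c : ℝ} (hε : 0 ≤ ε) (hPr0 : ∀ p, 0 ≤ Pr p) (hPr1 : ∑ p, Pr p = 1)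
    (h : ∀ Q : α × β → ℝ, (∀ p, 0 ≤ Q p ∧ Q p ≤ Pr p) → 1 - ε ≤ ∑ p, Q p →
      c ≤ Real.logb 2 (maxCondSupportCard Q)) :
    c ≤ H0sm ε Pr := by
  refine le_csInf ⟨_, Pr, fun p => ⟨hPr0 p, le_rfl⟩, by linarith, rfl⟩ ?_
  rintro r ⟨Q, hQ, hsum, rfl⟩
  exact h Q hQ hsum

lemma H0sm_nonneg (hε : 0 ≤ ε) (hPr0 : ∀ p, 0 ≤ Pr p) (hPr1 : ∑ p, Pr p = 1) :
    0 ≤ H0sm ε Pr :=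
  le_H0sm hε hPr0 hPr1 fun _ _ _ => Real.logb_natCast_nonneg one_le_two _

lemma H0sm_le_logb_card (hε : 0 ≤ ε) (hPr0 : ∀ p, 0 ≤ Pr p) (hPr1 : ∑ p, Pr p = 1) :
    H0sm ε Pr ≤ Real.logb 2 (Fintype.card α) := by
  refine (H0sm_le_logb_maxCondSupportCard (fun p => ⟨hPr0 p, le_rfl⟩) (by linarith)).trans ?_
  exact Real.logb_natCast_mono one_lt_two <| Finset.sup_le fun b _ => card_filter_le _ _

lemma condInfoSpectrum_nonneg (hPr0 : ∀ p, 0 ≤ Pr p) : 0 ≤ condInfoSpectrum Pr N a :=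
  sum_nonneg fun p _ => by split_ifs <;> simp [hPr0 p]

lemma condInfoSpectrum_le_one (hPr0 : ∀ p, 0 ≤ Pr p) (hPr1 : ∑ p, Pr p = 1) :
    condInfoSpectrum Pr N a ≤ 1 :=
  hPr1 ▸ sum_le_sum fun p _ => by split_ifs <;> simp [hPr0 p]

lemma condInfoSpectrum_of_neg (hPr0 : ∀ p, 0 ≤ Pr p) (hN : 0 < N) (ha : a < 0) :
    condInfoSpectrum Pr N a = 0 := by
  refine sum_eq_zero fun p _ => if_neg fun h => ?_
  have : Real.logb 2 (condProb Pr p) ≤ 0 :=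
    Real.logb_nonpos one_lt_two (div_nonneg (hPr0 p) (marginal_nonneg hPr0 p.2))
      (condProb_le_one hPr0 p)
  have : 0 ≤ -Real.logb 2 (condProb Pr p) / N := div_nonneg (by linarith) hN.le
  linarith

lemma one_sub_condInfoSpectrum_le (hPr0 : ∀ p, 0 ≤ Pr p) (hPr1 : ∑ p, Pr p = 1) (hN : 0 < N) :
    1 - condInfoSpectrum Pr N a ≤ Fintype.card α * 2 ^ (-(N * a)) := by
  calc 1 - condInfoSpectrum Pr N a
      = ∑ p, (Pr p - if -Real.logb 2 (condProb Pr p) / N ≤ a then Pr p else 0) := by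
        rw [sum_sub_distrib, hPr1, condInfoSpectrum]
    _ ≤ ∑ p : α × β, 2 ^ (-(N * a)) * marginal Pr p.2 := by
        refine sum_le_sum fun p _ => ?_
        split_ifs with hc
        · simpa using mul_nonneg (by positivity) (marginal_nonneg hPr0 p.2)
        · simpa using le_rpow_mul_marginal_of_not_le hPr0 hN hc
    _ = ∑ _x : α, 2 ^ (-(N * a)) * ∑ b, marginal Pr b := by
        rw [Fintype.sum_prod_type]; simp only [mul_sum]
    _ = Fintype.card α * 2 ^ (-(N * a)) := by
        rw [sum_marginal, hPr1, mul_one, sum_const, card_univ, nsmul_eq_mul]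

lemma sum_le_condInfoSpectrum_add (hPr0 : ∀ p, 0 ≤ Pr p) (hPr1 : ∑ p, Pr p = 1) (hN : 0 < N)
    (hQ : ∀ p, 0 ≤ Q p ∧ Q p ≤ Pr p) :
    ∑ p, Q p ≤ condInfoSpectrum Pr N a + maxCondSupportCard Q * 2 ^ (-(N * a)) := by
  set θ : ℝ := 2 ^ (-(N * a))
  have hpt : ∀ p, Q p ≤ (if -Real.logb 2 (condProb Pr p) / N ≤ a then Pr p else 0) +
      if 0 < Q p then θ * marginal Pr p.2 else 0 := by
    intro p
    have hθm : 0 ≤ θ * marginal Pr p.2 := mul_nonneg (by positivity) (marginal_nonneg hPr0 _)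
    split_ifs with hc hq hq
    · linarith [(hQ p).2]
    · linarith [(hQ p).2]
    · linarith [(hQ p).2, le_rpow_mul_marginal_of_not_le hPr0 hN hc]
    · linarith [not_lt.1 hq]
  have hsupp : ∑ p, (if 0 < Q p then θ * marginal Pr p.2 else 0) ≤ maxCondSupportCard Q * θ :=
    calc ∑ p, (if 0 < Q p then θ * marginal Pr p.2 else 0)
        = ∑ b, #{x | 0 < Q (x, b)} * (θ * marginal Pr b) := by
          rw [Fintype.sum_prod_type_right]
          exact sum_congr rfl fun b _ => by
            rw [← sum_filter]; dsimp only; rw [sum_const, nsmul_eq_mul]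
      _ ≤ ∑ b, maxCondSupportCard Q * (θ * marginal Pr b) := by
          refine sum_le_sum fun b _ => mul_le_mul_of_nonneg_right ?_
            (mul_nonneg (by positivity) (marginal_nonneg hPr0 b))
          exact_mod_cast le_sup (f := fun b => #{x | 0 < Q (x, b)}) (mem_univ b)
      _ = maxCondSupportCard Q * θ := by
          rw [← mul_sum, ← mul_sum, sum_marginal, hPr1, mul_one]
  calc ∑ p, Q p ≤ ∑ p, ((if -Real.logb 2 (condProb Pr p) / N ≤ a then Pr p else 0) +
        if 0 < Q p then θ * marginal Pr p.2 else 0) := sum_le_sum fun p _ => hpt p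
    _ ≤ condInfoSpectrum Pr N a + maxCondSupportCard Q * θ := by
        rw [sum_add_distrib]; exact add_le_add le_rfl hsupp

lemma H0sm_le_mul_of_le_condInfoSpectrum (hPr0 : ∀ p, 0 ≤ Pr p) (hN : 0 < N) (ha : 0 ≤ a)
    (hF : 1 - ε ≤ condInfoSpectrum Pr N a) : H0sm ε Pr ≤ N * a := by
  set Q : α × β → ℝ := fun p => if -Real.logb 2 (condProb Pr p) / N ≤ a then Pr p else 0
  have hQ : ∀ p, 0 ≤ Q p ∧ Q p ≤ Pr p := fun p => by
    by_cases hc : -Real.logb 2 (condProb Pr p) / N ≤ a <;> simp [Q, hc, hPr0 p]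
  have hcard : ∀ b, (#{x | 0 < Q (x, b)} : ℝ) ≤ 2 ^ (N * a) := by
    intro b
    have hθ : ∀ x ∈ ({x | 0 < Q (x, b)} : Finset α),
        2 ^ (-(N * a)) ≤ condProb Pr (x, b) := by
      intro x hx
      have hQx : 0 < Q (x, b) := (mem_filter.1 hx).2
      have hc : -Real.logb 2 (condProb Pr (x, b)) / N ≤ a := by
        by_contra hc; simp [Q, hc] at hQx
      have hPx : 0 < Pr (x, b) := hQx.trans_le (hQ _).2
      exact (Real.neg_logb_div_le_iff one_lt_two
        (div_pos hPx (hPx.trans_le (le_marginal hPr0 (x, b)))) hN).1 hc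
    have hmass := (card_nsmul_le_sum _ _ _ hθ).trans <| (sum_le_sum_of_subset_of_nonneg
      (subset_univ _) fun x _ _ => div_nonneg (hPr0 _) (marginal_nonneg hPr0 b)).trans
      (sum_condProb_le_one b)
    rwa [nsmul_eq_mul, Real.rpow_neg zero_le_two, ← div_eq_mul_inv,
      div_le_one (by positivity)] at hmass
  refine (H0sm_le_logb_maxCondSupportCard hQ hF).trans
    (Real.logb_natCast_le one_lt_two (by positivity) ?_)
  exact (Nat.cast_le.2 (Finset.sup_le fun b _ => Nat.le_floor (hcard b))).trans
    (Nat.floor_le (by positivity))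

lemma add_logb_le_H0sm (hε : 0 ≤ ε) (hPr0 : ∀ p, 0 ≤ Pr p) (hPr1 : ∑ p, Pr p = 1)
    (hN : 0 < N) (hF : condInfoSpectrum Pr N a < 1 - ε) :
    N * a + Real.logb 2 (1 - ε - condInfoSpectrum Pr N a) ≤ H0sm ε Pr := by
  refine le_H0sm hε hPr0 hPr1 fun Q hQ hsum => ?_
  have hθ : (0 : ℝ) < 2 ^ (-(N * a)) := by positivity
  have hMθ : 1 - ε - condInfoSpectrum Pr N a ≤ maxCondSupportCard Q * 2 ^ (-(N * a)) := by
    linarith [sum_le_condInfoSpectrum_add (a := a) hPr0 hPr1 hN hQ]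
  have hM : (0 : ℝ) < maxCondSupportCard Q :=
    pos_of_mul_pos_left ((sub_pos.2 hF).trans_le hMθ) hθ.le
  have := Real.logb_le_logb_of_le one_lt_two (sub_pos.2 hF) hMθ
  rw [Real.logb_mul hM.ne' hθ.ne', Real.logb_rpow two_pos (by norm_num)] at this
  linarith

end OneShot

lemma Real.natCast_mul_two_rpow_neg_logb_add_one_le (m : ℕ) :
    (m : ℝ) * 2 ^ (-(Real.logb 2 m + 1)) ≤ 1 / 2 := by
  rcases Nat.eq_zero_or_pos m with rfl | hm
  · norm_num
  · rw [Real.rpow_neg zero_le_two, Real.rpow_add two_pos,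
      Real.rpow_logb two_pos (by norm_num) (by exact_mod_cast hm), Real.rpow_one, mul_inv,
      ← mul_assoc, mul_inv_cancel₀ (by positivity), one_mul, one_div]

section Asymptotic

variable {X : Type*} [Fintype X] {β : ℕ → Type*} [∀ n, Fintype (β n)]
  (P : (n : ℕ) → (Fin (n + 1) → X) × β n → ℝ) {ε a : ℝ}

/-- `H̄(X|Y)` is the infimum of this set. -/
def spectralSupSet : Set ℝ :=
  {a | liminf (fun n => condInfoSpectrum (P n) ((n : ℝ) + 1) a) atTop = 1}

lemma H0sm_div_nonneg (hP0 : ∀ n p, 0 ≤ P n p) (hP1 : ∀ n, ∑ p, P n p = 1) (hε : 0 ≤ ε)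
    (n : ℕ) : 0 ≤ H0sm ε (P n) / ((n : ℝ) + 1) :=
  div_nonneg (H0sm_nonneg hε (hP0 n) (hP1 n)) (by positivity)

lemma H0sm_div_le_logb_card (hP0 : ∀ n p, 0 ≤ P n p) (hP1 : ∀ n, ∑ p, P n p = 1)
    (hε : 0 ≤ ε) (n : ℕ) : H0sm ε (P n) / ((n : ℝ) + 1) ≤ Real.logb 2 (Fintype.card X) := by
  rw [div_le_iff₀ (by positivity)]
  calc H0sm ε (P n) ≤ Real.logb 2 (Fintype.card (Fin (n + 1) → X)) :=
        H0sm_le_logb_card hε (hP0 n) (hP1 n)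
    _ = Real.logb 2 (Fintype.card X) * ((n : ℝ) + 1) := by
        rw [Fintype.card_fun, Fintype.card_fin, Nat.cast_pow, Real.logb_pow]; push_cast; ring

lemma nonneg_of_mem_spectralSupSet (hP0 : ∀ n p, 0 ≤ P n p) (ha : a ∈ spectralSupSet P) :
    0 ≤ a := by
  by_contra! h
  have hzero : (fun n : ℕ => condInfoSpectrum (P n) ((n : ℝ) + 1) a) = fun _ => 0 :=
    funext fun n => condInfoSpectrum_of_neg (hP0 n) (by positivity) h
  rw [spectralSupSet, Set.mem_ofPred_eq, hzero, liminf_const] at ha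
  exact zero_ne_one ha

lemma logb_card_add_one_mem_spectralSupSet (hP0 : ∀ n p, 0 ≤ P n p)
    (hP1 : ∀ n, ∑ p, P n p = 1) : Real.logb 2 (Fintype.card X) + 1 ∈ spectralSupSet P := by
  set L := Real.logb 2 (Fintype.card X)
  have hlow : ∀ n : ℕ,
      1 - (1 / 2 : ℝ) ^ (n + 1) ≤ condInfoSpectrum (P n) ((n : ℝ) + 1) (L + 1) := by
    intro n
    have hexp : -(((n : ℝ) + 1) * (L + 1)) = -(L + 1) * ((n + 1 : ℕ) : ℝ) := by
      push_cast; ring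
    have hsmall : (Fintype.card (Fin (n + 1) → X) : ℝ) * 2 ^ (-(((n : ℝ) + 1) * (L + 1))) ≤
        (1 / 2) ^ (n + 1) := by
      rw [hexp, Real.rpow_mul_natCast zero_le_two, Fintype.card_fun, Fintype.card_fin,
        Nat.cast_pow, ← mul_pow]
      exact pow_le_pow_left₀ (by positivity) (Real.natCast_mul_two_rpow_neg_logb_add_one_le _) _
    linarith [one_sub_condInfoSpectrum_le (N := (n : ℝ) + 1) (a := L + 1) (hP0 n) (hP1 n)
      (by positivity)]
  have hlim : Tendsto (fun n : ℕ => 1 - (1 / 2 : ℝ) ^ (n + 1)) atTop (𝓝 1) := by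
    simpa using tendsto_const_nhds.sub ((tendsto_pow_atTop_nhds_zero_of_lt_one
      (by norm_num : (0 : ℝ) ≤ 1 / 2) (by norm_num)).comp (tendsto_add_atTop_nat 1))
  exact (tendsto_of_tendsto_of_tendsto_of_le_of_le hlim tendsto_const_nhds hlow
    fun n => condInfoSpectrum_le_one (hP0 n) (hP1 n)).liminf_eq

lemma limsup_H0sm_div_le (hP0 : ∀ n p, 0 ≤ P n p) (hP1 : ∀ n, ∑ p, P n p = 1) (hε : 0 < ε)
    (ha : a ∈ spectralSupSet P) :
    limsup (fun n => H0sm ε (P n) / ((n : ℝ) + 1)) atTop ≤ a := by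
  have hlim : liminf (fun n => condInfoSpectrum (P n) ((n : ℝ) + 1) a) atTop = 1 := ha
  have hev : ∀ᶠ n in atTop, 1 - ε < condInfoSpectrum (P n) ((n : ℝ) + 1) a :=
    eventually_lt_of_lt_liminf (by rw [hlim]; linarith)
      (isBoundedUnder_of ⟨0, fun n => condInfoSpectrum_nonneg (hP0 n)⟩)
  refine limsup_le_of_le (isBoundedUnder_of
    ⟨0, fun n => H0sm_div_nonneg P hP0 hP1 hε.le n⟩).isCoboundedUnder_le
    (hev.mono fun n hn => ?_)
  rw [div_le_iff₀ (by positivity), mul_comm]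
  exact H0sm_le_mul_of_le_condInfoSpectrum (hP0 n) (by positivity)
    (nonneg_of_mem_spectralSupSet P hP0 ha) hn.le

lemma exists_le_limsup_H0sm_div (hP0 : ∀ n p, 0 ≤ P n p) (hP1 : ∀ n, ∑ p, P n p = 1)
    (ha : a ∉ spectralSupSet P) : ∃ ε₀ > 0, ∀ ε ∈ Set.Ioc 0 ε₀,
      a ≤ limsup (fun n => H0sm ε (P n) / ((n : ℝ) + 1)) atTop := by
  set F := fun n : ℕ => condInfoSpectrum (P n) ((n : ℝ) + 1) a
  have hF : liminf F atTop < 1 :=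
    (liminf_le_of_frequently_le (.of_forall fun n => condInfoSpectrum_le_one (hP0 n) (hP1 n))
      (isBoundedUnder_of ⟨0, fun n => condInfoSpectrum_nonneg (hP0 n)⟩)).lt_of_ne ha
  -- along `n` with `F n < liminf F + ε₀` and for `ε ≤ ε₀`, the slack `1 - ε - F n` exceeds `ε₀`
  set ε₀ := (1 - liminf F atTop) / 3 with hε₀_def
  have hε₀ : 0 < ε₀ := div_pos (sub_pos.2 hF) three_pos
  refine ⟨ε₀, hε₀, fun ε hε => ?_⟩
  have hfreq : ∃ᶠ n in atTop, F n < liminf F atTop + ε₀ :=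
    frequently_lt_of_liminf_lt (isBoundedUnder_of
      ⟨1, fun n => condInfoSpectrum_le_one (hP0 n) (hP1 n)⟩).isCoboundedUnder_ge (by linarith)
  refine le_limsup_of_frequently_le_add (c := fun n : ℕ => Real.logb 2 ε₀ / ((n : ℝ) + 1))
    (tendsto_const_nhds.div_atTop (tendsto_atTop_add_const_right _ 1 tendsto_natCast_atTop_atTop))
    (isBoundedUnder_of ⟨_, fun n => H0sm_div_le_logb_card P hP0 hP1 hε.1.le n⟩)
    (hfreq.mono fun n hn => ?_)
  have hlt : F n < 1 - ε := by linarith [hε.2, hε₀_def]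
  have hH := add_logb_le_H0sm hε.1.le (hP0 n) (hP1 n) (by positivity) hlt
  have hlog : Real.logb 2 ε₀ ≤ Real.logb 2 (1 - ε - F n) :=
    Real.logb_le_logb_of_le one_lt_two hε₀ (by linarith [hε.2, hε₀_def])
  rw [le_div_iff₀ (by positivity), add_mul, div_mul_cancel₀ _ (by positivity)]
  linarith

end Asymptotic

/-- for an arbitrary sequence of joint pmfs `P n` on `𝒳^(n+1) × 𝒴^(n+1)`,
`lim_{ε→0⁺} limsup_n H₀^ε(X^n|Y^n)/n = H̄(X|Y)`, the spectral-sup conditional entropy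
rate `H̄(X|Y) = inf {a | liminf_n Pr{(1/n) log₂ (1/P_{X^n|Y^n}(X^n|Y^n)) ≤ a} = 1}`. -/
theorem smooth_conditional_entropy_rate_eq_specSup
    {X Y : Type*} [Fintype X] [Fintype Y]
    (P : (n : ℕ) → ((Fin (n + 1) → X) × (Fin (n + 1) → Y)) → ℝ)
    (hP0 : ∀ n p, 0 ≤ P n p) (hP1 : ∀ n, ∑ p, P n p = 1)
    (Hbar : ℝ)
    (hHbar : Hbar = sInf {a : ℝ |
      Filter.liminf (fun n =>
        ∑ p : (Fin (n + 1) → X) × (Fin (n + 1) → Y),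
          if -Real.logb 2 (P n p / ∑ x, P n (x, p.2)) / (n + 1) ≤ a then P n p else 0)
        Filter.atTop = 1}) :
    Filter.Tendsto
      (fun ε : ℝ =>
        Filter.limsup (fun n => H0sm ε (P n) / (n + 1)) Filter.atTop)
      (nhdsWithin 0 (Set.Ioi 0)) (nhds Hbar) := by
  replace hHbar : Hbar = sInf (spectralSupSet P) := hHbar
  have hne : (spectralSupSet P).Nonempty := ⟨_, logb_card_add_one_mem_spectralSupSet P hP0 hP1⟩
  have hbdd : BddBelow (spectralSupSet P) :=
    ⟨0, fun a ha => nonneg_of_mem_spectralSupSet P hP0 ha⟩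
  refine tendsto_order.2 ⟨fun b hb => ?_, fun b hb => ?_⟩
  · obtain ⟨a, hba, haH⟩ := exists_between hb
    obtain ⟨ε₀, hε₀, hle⟩ :=
      exists_le_limsup_H0sm_div P hP0 hP1 (notMem_of_lt_csInf (hHbar ▸ haH) hbdd)
    filter_upwards [Ioc_mem_nhdsGT hε₀] with ε hε using hba.trans_le (hle ε hε)
  · filter_upwards [self_mem_nhdsWithin] with ε hε
    exact (le_csInf hne fun a ha => limsup_H0sm_div_le P hP0 hP1 hε ha).trans_lt (hHbar ▸ hb)
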